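/- For every ρ of the form ρ = μ(f) = ∫ ν a f dv with f nonnegative, not almost-everywhere zero, and ν(1+|v|²)f integrable, the dual function λ ↦ z(λ; ρ) = ∫ ν exp(λ·a) dv − λ·ρ attains its infimum over Λ = {λ : λ₂ < 0} at a unique point λ* ∈ Λ. -/

import Mathlib

/-!
The dual function `z(λ) = ∫ ν exp(λ · a) - λ · ρ` is continuous and strictly convex on
`Λ = {λ₂ < 0}`; strictly, because `exp` is strictly convex and `λ · a(v) = λ' · a(v)` only on a
null quadric. Its sublevel sets are bounded: along a ray `t ω`, either `ω · a > 0` on an open set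
and the integral grows like `exp (c t)`, or `ω · a ≤ 0` everywhere, and then `ω · ρ < 0` because
`f` is nontrivial, so `-t ω · ρ` grows linearly; compactness of the unit sphere makes this
uniform in the direction. By Fatou's lemma the integral stays finite on the closure of a
sublevel set, so that closure is a compact subset of `Λ` on which `z` attains its minimum;
strict convexity makes the minimizer unique.
-/

open MeasureTheory Real Filter
open scoped Topology

noncomputable section

abbrev V3 : Type := Fin 3 → ℝ

def dot3 (a b : V3) : ℝ := ∑ i, a i * b i

def nsq (v : V3) : ℝ := ∑ i, (v i) ^ 2

abbrev L5 : Type := ℝ × V3 × ℝ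

def dot5 (a b : L5) : ℝ := a.1 * b.1 + dot3 a.2.1 b.2.1 + a.2.2 * b.2.2

def aVec (m : ℝ) (v : V3) : L5 := (m, m • v, m * nsq v)

def expA (m : ℝ) (l : L5) (v : V3) : ℝ := Real.exp (dot5 l (aVec m v))

def momVec (m : ℝ) (ν g : V3 → ℝ) : L5 :=
  (∫ v, ν v * (m * g v), fun i => ∫ v, ν v * (m * v i) * g v,
    ∫ v, ν v * (m * nsq v) * g v)

def zdual (m : ℝ) (ν : V3 → ℝ) (l ρ : L5) : ℝ :=
  (∫ v, ν v * expA m l v) - dot5 l ρ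

def entH (z : ℝ) : ℝ := z * Real.log z - z

def dualCLM (ρ : L5) : L5 →L[ℝ] ℝ :=
  LinearMap.toContinuousLinearMap
    { toFun := fun δ => dot5 δ ρ
      map_add' := by
        intro a b
        simp [dot5, dot3, Prod.fst_add, Prod.snd_add, Pi.add_apply, add_mul,
          Finset.sum_add_distrib]
        ring
      map_smul' := by
        intro c a
        simp only [dot5, dot3, Prod.smul_fst, Prod.smul_snd, Pi.smul_apply,
          smul_eq_mul, Finset.mul_sum, RingHom.id_apply]
        ring_nf
        rw [Finset.mul_sum]
        ring_nf }

open scoped ENNReal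

lemma dot5_comm (a b : L5) : dot5 a b = dot5 b a := by
  simp only [dot5, dot3, mul_comm]

lemma dualCLM_apply (ρ δ : L5) : dualCLM ρ δ = dot5 δ ρ := rfl

lemma dot5_add_left (a b c : L5) : dot5 (a + b) c = dot5 a c + dot5 b c :=
  map_add (dualCLM c) a b

lemma dot5_sub_left (a b c : L5) : dot5 (a - b) c = dot5 a c - dot5 b c :=
  map_sub (dualCLM c) a b

lemma dot5_smul_left (r : ℝ) (a c : L5) : dot5 (r • a) c = r * dot5 a c :=
  map_smul (dualCLM c) r a

lemma continuous_dot5_left (c : L5) : Continuous fun l : L5 => dot5 l c :=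
  (dualCLM c).continuous

lemma nsq_nonneg (v : V3) : 0 ≤ nsq v := Finset.sum_nonneg fun _ _ => sq_nonneg _

lemma abs_le_one_add_nsq (v : V3) (i : Fin 3) : |v i| ≤ 1 + nsq v := by
  have hi : v i ^ 2 ≤ nsq v :=
    Finset.single_le_sum (f := fun j => v j ^ 2) (fun _ _ => sq_nonneg _) (Finset.mem_univ i)
  nlinarith [sq_abs (v i), abs_nonneg (v i)]

lemma abs_dot5_le (a b : L5) : |dot5 a b| ≤ 5 * (‖a‖ * ‖b‖) := by
  have hfst (x : L5) : |x.1| ≤ ‖x‖ := norm_fst_le x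
  have hmid (x : L5) (i : Fin 3) : |x.2.1 i| ≤ ‖x‖ :=
    (norm_le_pi_norm x.2.1 i).trans ((norm_fst_le x.2).trans (norm_snd_le x))
  have hsnd (x : L5) : |x.2.2| ≤ ‖x‖ := (norm_snd_le x.2).trans (norm_snd_le x)
  have hprod {s t : ℝ} (hs : |s| ≤ ‖a‖) (ht : |t| ≤ ‖b‖) : |s * t| ≤ ‖a‖ * ‖b‖ := by
    rw [abs_mul]; exact mul_le_mul hs ht (abs_nonneg t) (norm_nonneg a)
  have h0 := abs_le.1 (hprod (hfst a) (hfst b))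
  have h1 := abs_le.1 (hprod (hmid a 0) (hmid b 0))
  have h2 := abs_le.1 (hprod (hmid a 1) (hmid b 1))
  have h3 := abs_le.1 (hprod (hmid a 2) (hmid b 2))
  have h4 := abs_le.1 (hprod (hsnd a) (hsnd b))
  simp only [dot5, dot3, Fin.sum_univ_three]
  rw [abs_le]; constructor <;> linarith

lemma norm_aVec_le (m : ℝ) (v : V3) : ‖aVec m v‖ ≤ |m| * (1 + nsq v) := by
  have hn := nsq_nonneg v
  have hv : ‖v‖ ≤ 1 + nsq v :=
    (pi_norm_le_iff_of_nonneg (by positivity)).2 fun i => abs_le_one_add_nsq v i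
  refine norm_prod_le_iff.2 ⟨?_, norm_prod_le_iff.2 ⟨?_, ?_⟩⟩ <;> simp only [aVec]
  · rw [Real.norm_eq_abs]; nlinarith [abs_nonneg m]
  · rw [norm_smul, Real.norm_eq_abs]; exact mul_le_mul_of_nonneg_left hv (abs_nonneg m)
  · rw [Real.norm_eq_abs, abs_mul, abs_of_nonneg hn]
    exact mul_le_mul_of_nonneg_left (by linarith) (abs_nonneg m)

lemma abs_dot5_aVec_le (m : ℝ) (l : L5) (v : V3) :
    |dot5 l (aVec m v)| ≤ 5 * |m| * ‖l‖ * (1 + nsq v) := by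
  calc |dot5 l (aVec m v)| ≤ 5 * (‖l‖ * ‖aVec m v‖) := abs_dot5_le _ _
    _ ≤ 5 * (‖l‖ * (|m| * (1 + nsq v))) := by gcongr; exact norm_aVec_le m v
    _ = 5 * |m| * ‖l‖ * (1 + nsq v) := by ring

lemma dot5_aVec (m : ℝ) (l : L5) (v : V3) :
    dot5 l (aVec m v) = m * (l.1 + dot3 l.2.1 v + l.2.2 * nsq v) := by
  simp only [dot5, aVec, dot3, Pi.smul_apply, smul_eq_mul, Fin.sum_univ_three]
  ring

lemma continuous_dot5_aVec (m : ℝ) : Continuous fun p : L5 × V3 => dot5 p.1 (aVec m p.2) := by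
  simp only [dot5, aVec, dot3, nsq]
  fun_prop

lemma continuous_aVec (m : ℝ) : Continuous (aVec m) := by
  unfold aVec nsq
  fun_prop

lemma expA_pos (m : ℝ) (l : L5) (v : V3) : 0 < expA m l v := exp_pos _

lemma continuous_expA (m : ℝ) (l : L5) : Continuous (expA m l) :=
  continuous_exp.comp ((continuous_dot5_aVec m).comp (Continuous.prodMk_right l))

lemma volume_setOf_nsq_eq (r : ℝ) : volume {v : V3 | nsq v = r} = 0 := by
  have hsub : {v : V3 | nsq v = r} ⊆ WithLp.toLp 2 ⁻¹' Metric.sphere 0 (√r) := by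
    intro v hv
    have hnorm : ‖WithLp.toLp 2 v‖ ^ 2 = nsq v := by
      simp [EuclideanSpace.norm_sq_eq, nsq]
    rw [Set.mem_preimage, mem_sphere_zero_iff_norm, ← Set.mem_ofPred.1 hv, ← hnorm,
      Real.sqrt_sq (norm_nonneg _)]
  refine measure_mono_null hsub ?_
  rw [(PiLp.volume_preserving_toLp (Fin 3)).measure_preimage
    Metric.isClosed_sphere.measurableSet.nullMeasurableSet]
  exact Measure.addHaar_sphere volume 0 _

lemma volume_setOf_dot3_eq (c : V3) (hc : c ≠ 0) (b : ℝ) :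
    volume {v : V3 | dot3 c v = b} = 0 := by
  let φ : Module.Dual ℝ V3 := dotProductEquiv ℝ (Fin 3) c
  have hφ (v : V3) : φ v = dot3 c v := rfl
  rcases Set.eq_empty_or_nonempty {v : V3 | dot3 c v = b} with hempty | ⟨v₀, hv₀⟩
  · rw [hempty, measure_empty]
  have hker : LinearMap.ker φ ≠ ⊤ := by
    rw [Ne, LinearMap.ker_eq_top]
    exact (LinearEquiv.map_ne_zero_iff _).2 hc
  have hset : {v : V3 | dot3 c v = b} = (· + -v₀) ⁻¹' (LinearMap.ker φ : Set V3) := by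
    ext v
    rw [Set.mem_preimage, SetLike.mem_coe, LinearMap.mem_ker, map_add, map_neg, hφ, hφ,
      Set.mem_ofPred.1 hv₀, Set.mem_ofPred]
    constructor <;> intro h <;> linarith
  rw [hset, measure_preimage_add_right]
  exact Measure.addHaar_submodule volume _ hker

lemma volume_setOf_dot5_aVec_eq_zero {m : ℝ} (hm : m ≠ 0) {d : L5} (hd : d ≠ 0) :
    volume {v : V3 | dot5 d (aVec m v) = 0} = 0 := by
  simp only [dot5_aVec, mul_eq_zero, hm, false_or]
  obtain ⟨d₀, d₁, d₂⟩ := d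
  rcases eq_or_ne d₂ 0 with rfl | hd₂
  · rcases eq_or_ne d₁ 0 with rfl | hd₁
    · have hd₀ : d₀ ≠ 0 := fun h => hd (by simp [h])
      simp [dot3, hd₀]
    · simp only [zero_mul, add_zero, add_comm d₀, add_eq_zero_iff_eq_neg]
      exact volume_setOf_dot3_eq d₁ hd₁ (-d₀)
  · -- complete the square: the quadric is a translate of a sphere
    set b : V3 := (2 * d₂)⁻¹ • d₁
    have hsq (v : V3) : d₀ + dot3 d₁ v + d₂ * nsq v = d₂ * (nsq (v + b) - (nsq b - d₀ / d₂)) := by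
      simp only [b, nsq, dot3, Pi.add_apply, Pi.smul_apply, smul_eq_mul, Fin.sum_univ_three]
      field_simp
      ring
    have hset : {v : V3 | d₀ + dot3 d₁ v + d₂ * nsq v = 0}
        = (· + b) ⁻¹' {w : V3 | nsq w = nsq b - d₀ / d₂} := by
      ext v
      simp [hsq, hd₂, sub_eq_zero]
    rw [hset, measure_preimage_add_right]
    exact volume_setOf_nsq_eq _

lemma integral_pos_of_pos_on {α : Type*} [MeasurableSpace α] {μ : Measure α} {f : α → ℝ}
    {s : Set α} (hf : Integrable f μ) (h0 : 0 ≤ᵐ[μ] f) (hs : 0 < μ s)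
    (hpos : ∀ x ∈ s, 0 < f x) : 0 < ∫ x, f x ∂μ := by
  rw [integral_pos_iff_support_of_nonneg_ae h0 hf]
  exact hs.trans_le (measure_mono fun x hx => (hpos x hx).ne')

section Moments

variable {m : ℝ} {ν f : V3 → ℝ}

lemma integrable_mul_smul_aVec (hν : Measurable ν) (hf : Measurable f)
    (hfint : Integrable fun v => ν v * (1 + nsq v) * f v) :
    Integrable fun v => (ν v * f v) • aVec m v := by
  refine (hfint.norm.const_mul |m|).mono'
    ((hν.mul hf).smul (continuous_aVec m).measurable).aestronglyMeasurable
    (Eventually.of_forall fun v => ?_)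
  have hn : 0 ≤ 1 + nsq v := by linarith [nsq_nonneg v]
  calc ‖(ν v * f v) • aVec m v‖ ≤ |ν v * f v| * (|m| * (1 + nsq v)) := by
        rw [norm_smul, Real.norm_eq_abs]
        exact mul_le_mul_of_nonneg_left (norm_aVec_le m v) (abs_nonneg _)
    _ = |m| * ‖ν v * (1 + nsq v) * f v‖ := by
        rw [Real.norm_eq_abs, abs_mul, abs_mul, abs_mul, abs_of_nonneg hn]; ring

lemma momVec_eq_integral (hint : Integrable fun v => (ν v * f v) • aVec m v) :
    momVec m ν f = ∫ v, (ν v * f v) • aVec m v := by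
  have hint₂ := hint.snd
  refine Prod.ext ?_ (Prod.ext (funext fun i => ?_) ?_)
  · rw [fst_integral hint]
    exact integral_congr_ae (Eventually.of_forall fun v => by simp [aVec]; ring)
  · rw [snd_integral hint, fst_integral hint₂, eval_integral hint₂.fst.eval]
    exact integral_congr_ae (Eventually.of_forall fun v => by simp [aVec]; ring)
  · rw [snd_integral hint, snd_integral hint₂]
    exact integral_congr_ae (Eventually.of_forall fun v => by simp [aVec]; ring)

lemma integrable_mul_dot5_aVec (hint : Integrable fun v => (ν v * f v) • aVec m v) (l : L5) :
    Integrable fun v => ν v * f v * dot5 l (aVec m v) := by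
  simpa [dualCLM_apply, dot5_smul_left, dot5_comm (aVec m _)] using
    (dualCLM l).integrable_comp hint

lemma dot5_momVec (hint : Integrable fun v => (ν v * f v) • aVec m v) (l : L5) :
    dot5 l (momVec m ν f) = ∫ v, ν v * f v * dot5 l (aVec m v) := by
  rw [momVec_eq_integral hint, dot5_comm, ← dualCLM_apply,
    ← (dualCLM l).integral_comp_comm hint]
  simp only [map_smul, dualCLM_apply, smul_eq_mul, dot5_comm (aVec m _)]

lemma dot5_momVec_neg (hm : m ≠ 0) (hν : Measurable ν) (hνpos : ∀ v, 0 < ν v)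
    (hf : Measurable f) (hf0 : ∀ v, 0 ≤ f v) (hfne : ¬ f =ᵐ[volume] fun _ => (0 : ℝ))
    (hfint : Integrable fun v => ν v * (1 + nsq v) * f v) {ω : L5} (hω : ω ≠ 0)
    (hnonpos : ∀ v, dot5 ω (aVec m v) ≤ 0) : dot5 ω (momVec m ν f) < 0 := by
  have hint := integrable_mul_smul_aVec (m := m) hν hf hfint
  rw [dot5_momVec hint, ← neg_pos, ← integral_neg]
  have hsupp : 0 < volume {v | f v ≠ 0} := pos_iff_ne_zero.2 fun h => hfne (ae_iff.2 h)
  refine integral_pos_of_pos_on (s := {v | f v ≠ 0} \ {v | dot5 ω (aVec m v) = 0})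
    (integrable_mul_dot5_aVec hint ω).neg
    (Eventually.of_forall fun v => ?_) ?_ fun v ⟨hfv, hωv⟩ => ?_
  · have := mul_nonneg (mul_nonneg (hνpos v).le (hf0 v)) (neg_nonneg.2 (hnonpos v))
    simp only [Pi.zero_apply]; linarith
  · rwa [measure_sdiff_null (volume_setOf_dot5_aVec_eq_zero hm hω)]
  · have hfpos : 0 < f v := lt_of_le_of_ne (hf0 v) (Ne.symm hfv)
    have hωneg : dot5 ω (aVec m v) < 0 := lt_of_le_of_ne (hnonpos v) hωv
    have := mul_pos (mul_pos (hνpos v) hfpos) (neg_pos.2 hωneg)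
    linarith

end Moments

def dualDomain : Set L5 := {l | l.2.2 < 0}

def partitionFn (m : ℝ) (ν : V3 → ℝ) (l : L5) : ℝ := ∫ v, ν v * expA m l v

lemma zdual_eq (m : ℝ) (ν : V3 → ℝ) (l ρ : L5) :
    zdual m ν l ρ = partitionFn m ν l - dot5 l ρ := rfl

lemma convex_dualDomain : Convex ℝ dualDomain :=
  (convex_Iio 0).linear_preimage (LinearMap.snd ℝ V3 ℝ ∘ₗ LinearMap.snd ℝ ℝ (V3 × ℝ))

lemma lowerSemicontinuous_lintegral {X α : Type*} [TopologicalSpace X] [FirstCountableTopology X]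
    [MeasurableSpace α] {μ : Measure α} {g : X → α → ℝ≥0∞} (hg : ∀ x, AEMeasurable (g x) μ)
    (hlsc : ∀ a, LowerSemicontinuous fun x => g x a) :
    LowerSemicontinuous fun x => ∫⁻ a, g x a ∂μ := by
  refine lowerSemicontinuous_iff_le_liminf.2 fun x => ?_
  calc ∫⁻ a, g x a ∂μ ≤ ∫⁻ a, liminf (fun y => g y a) (𝓝 x) ∂μ :=
        lintegral_mono fun a => lowerSemicontinuous_iff_le_liminf.1 (hlsc a) x
    _ ≤ liminf (fun y => ∫⁻ a, g y a ∂μ) (𝓝 x) := lintegral_liminf_le' hg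

section PartitionFn

variable {m : ℝ} {ν : V3 → ℝ}

lemma measurable_mul_expA (hν : Measurable ν) (l : L5) :
    Measurable fun v => ν v * expA m l v :=
  hν.mul (continuous_expA m l).measurable

lemma continuous_mul_expA_left (v : V3) :
    Continuous fun l : L5 => ν v * expA m l v :=
  continuous_const.mul (continuous_exp.comp (continuous_dot5_left _))

lemma dot5_add_smul_aVec (l : L5) (r : ℝ) (v : V3) :
    dot5 (l + r • ((1 : ℝ), (0 : V3), (1 : ℝ))) (aVec m v)
      = dot5 l (aVec m v) + r * (m * (1 + nsq v)) := by
  rw [dot5_add_left, dot5_smul_left, dot5_aVec m ((1 : ℝ), (0 : V3), (1 : ℝ))]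
  simp [dot3]

lemma continuousOn_partitionFn (hm : 0 ≤ m) (hν : Measurable ν) (hν0 : ∀ v, 0 ≤ ν v)
    (hint : ∀ l ∈ dualDomain, Integrable fun v => ν v * expA m l v) :
    ContinuousOn (partitionFn m ν) dualDomain := by
  intro l₀ hl₀
  refine ContinuousAt.continuousWithinAt ?_
  have hl₀' : l₀.2.2 < 0 := hl₀
  obtain ⟨r, hr, hr₀⟩ : ∃ r, 0 < r ∧ l₀.2.2 + r < 0 := ⟨-l₀.2.2 / 2, by linarith, by linarith⟩
  -- on `ball l₀ (r / 5)`: `l · a(v) ≤ l₀ · a(v) + r m (1 + |v|²) = μ · a(v)`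
  set μ := l₀ + r • ((1 : ℝ), (0 : V3), (1 : ℝ))
  have hμ : μ ∈ dualDomain := by
    show l₀.2.2 + r * 1 < 0
    rwa [mul_one]
  refine continuousAt_of_dominated (bound := fun v => ν v * expA m μ v)
    (Eventually.of_forall fun l => (measurable_mul_expA hν l).aestronglyMeasurable) ?_
    (hint μ hμ) (Eventually.of_forall fun v => (continuous_mul_expA_left v).continuousAt)
  filter_upwards [Metric.ball_mem_nhds l₀ (by positivity : 0 < r / 5)] with l hl
  refine Eventually.of_forall fun v => ?_
  have hdist : ‖l - l₀‖ < r / 5 := by rwa [Metric.mem_ball, dist_eq_norm] at hl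
  have hn : 0 ≤ 1 + nsq v := by linarith [nsq_nonneg v]
  have hdot : dot5 l (aVec m v) ≤ dot5 μ (aVec m v) := by
    have hdiff := le_of_abs_le (abs_dot5_aVec_le m (l - l₀) v)
    rw [dot5_sub_left, abs_of_nonneg hm] at hdiff
    rw [dot5_add_smul_aVec]
    have : 5 * m * ‖l - l₀‖ * (1 + nsq v) ≤ r * (m * (1 + nsq v)) := by
      have := mul_le_mul_of_nonneg_right hdist.le (mul_nonneg hm hn)
      nlinarith
    linarith
  rw [Real.norm_eq_abs, abs_of_nonneg (mul_nonneg (hν0 v) (expA_pos m _ v).le)]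
  exact mul_le_mul_of_nonneg_left (exp_le_exp.2 hdot) (hν0 v)

lemma closure_subset_dualDomain (hν : Measurable ν) (hν0 : ∀ v, 0 ≤ ν v)
    (hass : ∀ l, Integrable (fun v => ν v * expA m l v) ↔ l ∈ dualDomain)
    {B : Set L5} (hB : B ⊆ dualDomain) {C : ℝ} (hC : ∀ l ∈ B, partitionFn m ν l ≤ C) :
    closure B ⊆ dualDomain := by
  have hnonneg (l : L5) : 0 ≤ᵐ[volume] fun v => ν v * expA m l v :=
    Eventually.of_forall fun v => mul_nonneg (hν0 v) (expA_pos m _ v).le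
  set Φ : L5 → ℝ≥0∞ := fun l => ∫⁻ v, ENNReal.ofReal (ν v * expA m l v)
  have hΦ : LowerSemicontinuous Φ :=
    lowerSemicontinuous_lintegral (fun l => (measurable_mul_expA hν l).ennreal_ofReal.aemeasurable)
      fun v => (ENNReal.continuous_ofReal.comp (continuous_mul_expA_left v)).lowerSemicontinuous
  have hBΦ : B ⊆ Φ ⁻¹' Set.Iic (ENNReal.ofReal C) := fun l hl => by
    have hΦl : Φ l = ENNReal.ofReal (partitionFn m ν l) :=
      (ofReal_integral_eq_lintegral_ofReal ((hass l).2 (hB hl)) (hnonneg l)).symm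
    rw [Set.mem_preimage, Set.mem_Iic, hΦl]
    exact ENNReal.ofReal_le_ofReal (hC l hl)
  intro l hl
  have hΦl : Φ l ≤ ENNReal.ofReal C := closure_minimal hBΦ (hΦ.isClosed_preimage _) hl
  refine (hass l).1 ⟨(measurable_mul_expA hν l).aestronglyMeasurable, ?_⟩
  rw [hasFiniteIntegral_iff_ofReal (hnonneg l)]
  exact hΦl.trans_lt ENNReal.ofReal_lt_top

end PartitionFn

lemma isBounded_of_eventually_smul_notMem {E : Type*} [NormedAddCommGroup E] [NormedSpace ℝ E]
    [ProperSpace E] {S : Set E}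
    (h : ∀ ω ∈ Metric.sphere (0 : E) 1, ∀ᶠ p : E × ℝ in 𝓝 ω ×ˢ atTop, p.2 • p.1 ∉ S) :
    Bornology.IsBounded S := by
  obtain ⟨U, hU, T, hT, hUT⟩ :=
    mem_prod_iff.1 ((isCompact_sphere (0 : E) 1).mem_nhdsSet_prod_of_forall h)
  obtain ⟨t₀, ht₀⟩ := mem_atTop_sets.1 hT
  refine isBounded_iff_forall_norm_le.2 ⟨max t₀ 0, fun x hxS => le_of_not_gt fun hlt => ?_⟩
  have hx : ‖x‖ ≠ 0 := ((le_max_right _ _).trans_lt hlt).ne'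
  have hω : ‖x‖⁻¹ • x ∈ U :=
    subset_of_mem_nhdsSet hU (by simp [norm_smul, inv_mul_cancel₀ hx])
  refine hUT (Set.mk_mem_prod hω (ht₀ _ ((le_max_left _ _).trans hlt.le))) ?_
  simpa [smul_smul, mul_inv_cancel₀ hx] using hxS

lemma tendsto_mul_exp_sub_mul_atTop {K c : ℝ} (hK : 0 < K) (hc : 0 < c) (C : ℝ) :
    Tendsto (fun t => K * exp (c * t) - C * t) atTop atTop := by
  have hpoly : Tendsto (fun t => t * (K * c ^ 2 / 2 * t - C)) atTop atTop :=
    tendsto_id.atTop_mul_atTop₀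
      (tendsto_atTop_add_const_right _ _ (tendsto_id.const_mul_atTop (by positivity)))
  refine tendsto_atTop_mono' _ ((eventually_ge_atTop 0).mono fun t ht => ?_) hpoly
  have hexp := mul_le_mul_of_nonneg_left (quadratic_le_exp_of_nonneg (mul_nonneg hc.le ht)) hK.le
  nlinarith [mul_pos hK hc, mul_nonneg (mul_nonneg hK.le hc.le) ht]

section Coercivity

variable {m : ℝ} {ν : V3 → ℝ}

lemma exp_mul_setIntegral_le_partitionFn (hν0 : ∀ v, 0 ≤ ν v) {U : Set V3}
    (hU : MeasurableSet U) {l l' : L5} (hl : Integrable fun v => ν v * expA m l v)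
    (hl' : Integrable fun v => ν v * expA m l' v) {b : ℝ}
    (hb : ∀ v ∈ U, b + dot5 l' (aVec m v) ≤ dot5 l (aVec m v)) :
    exp b * ∫ v in U, ν v * expA m l' v ≤ partitionFn m ν l := by
  calc exp b * ∫ v in U, ν v * expA m l' v = ∫ v in U, exp b * (ν v * expA m l' v) :=
        (integral_const_mul _ _).symm
    _ ≤ ∫ v in U, ν v * expA m l v := by
        refine setIntegral_mono_on (hl'.const_mul _).integrableOn hl.integrableOn hU fun v hv => ?_
        calc exp b * (ν v * expA m l' v) = ν v * exp (b + dot5 l' (aVec m v)) := by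
              rw [exp_add, expA]; ring
          _ ≤ ν v * expA m l v := mul_le_mul_of_nonneg_left (exp_le_exp.2 (hb v hv)) (hν0 v)
    _ ≤ partitionFn m ν l :=
        setIntegral_le_integral hl
          (Eventually.of_forall fun v => mul_nonneg (hν0 v) (expA_pos m l v).le)

lemma setIntegral_mul_expA_pos (hνpos : ∀ v, 0 < ν v) {l : L5}
    (hl : Integrable fun v => ν v * expA m l v) {U : Set V3} (hU : IsOpen U) (hne : U.Nonempty) :
    0 < ∫ v in U, ν v * expA m l v := by
  refine integral_pos_of_pos_on (s := U) hl.integrableOn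
    (Eventually.of_forall fun v => mul_nonneg (hνpos v).le (expA_pos m l v).le) ?_
    fun v _ => mul_pos (hνpos v) (expA_pos m l v)
  rw [Measure.restrict_apply_self]
  exact hU.measure_pos volume hne

lemma eventually_lt_zdual_smul_of_dot5_neg (hν0 : ∀ v, 0 ≤ ν v) {ω ρ : L5}
    (hωρ : dot5 ω ρ < 0) (s : ℝ) :
    ∀ᶠ p : L5 × ℝ in 𝓝 ω ×ˢ atTop, s < zdual m ν (p.2 • p.1) ρ := by
  have hnear : ∀ᶠ ω' in 𝓝 ω, dot5 ω' ρ < dot5 ω ρ / 2 :=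
    (continuous_dot5_left ρ).continuousAt.eventually_lt continuousAt_const (by linarith)
  have hlarge : ∀ᶠ t in atTop, 0 ≤ t ∧ s < t * -(dot5 ω ρ / 2) :=
    (eventually_ge_atTop 0).and
      ((tendsto_id.atTop_mul_const (by linarith)).eventually_gt_atTop s)
  filter_upwards [hnear.prod_mk hlarge] with ⟨ω', t⟩ ⟨hω', ht, hts⟩
  have hZ : 0 ≤ partitionFn m ν (t • ω') :=
    integral_nonneg fun v => mul_nonneg (hν0 v) (expA_pos m _ v).le
  have := mul_le_mul_of_nonneg_left hω'.le ht
  rw [zdual_eq, dot5_smul_left]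
  linarith

lemma eventually_lt_zdual_smul_of_dot5_aVec_pos (hm : 0 ≤ m)
    (hνpos : ∀ v, 0 < ν v) (hint : ∀ l ∈ dualDomain, Integrable fun v => ν v * expA m l v)
    {ω : L5} {v₀ : V3} (hv₀ : 0 < dot5 ω (aVec m v₀)) (ρ : L5) (s : ℝ) :
    ∀ᶠ p : L5 × ℝ in 𝓝 ω ×ˢ atTop, p.2 • p.1 ∈ dualDomain → s < zdual m ν (p.2 • p.1) ρ := by
  set c := dot5 ω (aVec m v₀) / 2
  have hc : 0 < c := half_pos hv₀
  obtain ⟨N, U, hN, hωN, hU, hv₀U, hNU⟩ := mem_nhds_prod_iff'.1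
    ((isOpen_lt continuous_const (continuous_dot5_aVec m)).mem_nhds (half_lt_self hv₀))
  -- `ν` need not be integrable on `U`; the smaller weight `ν exp (l₀ · a)` is
  set l₀ : L5 := (0, 0, -1)
  have hl₀ : l₀ ∈ dualDomain := show (-1 : ℝ) < 0 by norm_num
  have hl₀a (v : V3) : dot5 l₀ (aVec m v) ≤ 0 := by
    rw [dot5_aVec]; simp [l₀, dot3]; exact mul_nonneg hm (nsq_nonneg v)
  set K := ∫ v in U, ν v * expA m l₀ v
  have hK : 0 < K := setIntegral_mul_expA_pos hνpos (hint l₀ hl₀) hU ⟨v₀, hv₀U⟩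
  set C := 5 * ((‖ω‖ + 1) * ‖ρ‖)
  have hlarge : ∀ᶠ t in atTop, 0 ≤ t ∧ s < K * exp (c * t) - C * t :=
    (eventually_ge_atTop 0).and ((tendsto_mul_exp_sub_mul_atTop hK hc C).eventually_gt_atTop s)
  have hnear : ∀ᶠ ω' in 𝓝 ω, ω' ∈ N ∧ ω' ∈ Metric.ball ω 1 :=
    inter_mem (hN.mem_nhds hωN) (Metric.ball_mem_nhds ω one_pos)
  filter_upwards [hnear.prod_mk hlarge]
    with ⟨ω', t⟩ ⟨⟨hω'N, hω'ω⟩, ht, hts⟩ hmem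
  have hlow : exp (c * t) * K ≤ partitionFn m ν (t • ω') := by
    refine exp_mul_setIntegral_le_partitionFn (fun v => (hνpos v).le) hU.measurableSet
      (hint _ hmem) (hint l₀ hl₀) fun v hv => ?_
    have hcv : c < dot5 ω' (aVec m v) := hNU (Set.mk_mem_prod hω'N hv)
    rw [dot5_smul_left]
    nlinarith [hl₀a v, mul_le_mul_of_nonneg_left hcv.le ht]
  have hlin : dot5 (t • ω') ρ ≤ C * t := by
    have hnorm : ‖ω'‖ ≤ ‖ω‖ + 1 := by
      have := norm_le_norm_add_norm_sub' ω' ω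
      rw [Metric.mem_ball, dist_eq_norm] at hω'ω
      linarith
    rw [dot5_smul_left]
    have := le_of_abs_le (abs_dot5_le ω' ρ)
    have := mul_le_mul_of_nonneg_right hnorm (norm_nonneg ρ)
    nlinarith
  rw [zdual_eq]
  linarith

end Coercivity

lemma exists_isMinOn_of_closure_sublevel {E : Type*} [TopologicalSpace E] {F : E → ℝ}
    {D : Set E} {x₀ : E} (hx₀ : x₀ ∈ D) (hF : ContinuousOn F D)
    (hK : IsCompact (closure {x | x ∈ D ∧ F x ≤ F x₀}))
    (hKD : closure {x | x ∈ D ∧ F x ≤ F x₀} ⊆ D) :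
    ∃ x ∈ D, IsMinOn F D x := by
  have hx₀K : x₀ ∈ closure {x | x ∈ D ∧ F x ≤ F x₀} := subset_closure ⟨hx₀, le_rfl⟩
  obtain ⟨x, hxK, hmin⟩ := hK.exists_isMinOn ⟨x₀, hx₀K⟩ (hF.mono hKD)
  refine ⟨x, hKD hxK, fun y hy => ?_⟩
  by_cases hyx₀ : F y ≤ F x₀
  · exact hmin (subset_closure ⟨hy, hyx₀⟩)
  · exact (isMinOn_iff.1 hmin x₀ hx₀K).trans (le_of_not_ge hyx₀)

section Minimizer

variable {m : ℝ} {ν f : V3 → ℝ}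

lemma eventually_smul_notMem_sublevel (hm : 0 < m) (hν : Measurable ν) (hνpos : ∀ v, 0 < ν v)
    (hint : ∀ l ∈ dualDomain, Integrable fun v => ν v * expA m l v) (hf : Measurable f)
    (hf0 : ∀ v, 0 ≤ f v) (hfne : ¬ f =ᵐ[volume] fun _ => (0 : ℝ))
    (hfint : Integrable fun v => ν v * (1 + nsq v) * f v) {ω : L5} (hω : ω ≠ 0) (s : ℝ) :
    ∀ᶠ p : L5 × ℝ in 𝓝 ω ×ˢ atTop,
      p.2 • p.1 ∉ {l | l ∈ dualDomain ∧ zdual m ν l (momVec m ν f) ≤ s} := by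
  by_cases hpos : ∃ v₀, 0 < dot5 ω (aVec m v₀)
  · obtain ⟨v₀, hv₀⟩ := hpos
    filter_upwards [eventually_lt_zdual_smul_of_dot5_aVec_pos hm.le hνpos hint hv₀ _ s]
      with p hp ⟨hmem, hle⟩
    exact (hp hmem).not_ge hle
  · simp only [not_exists, not_lt] at hpos
    have hωρ := dot5_momVec_neg hm.ne' hν hνpos hf hf0 hfne hfint hω hpos
    filter_upwards [eventually_lt_zdual_smul_of_dot5_neg (fun v => (hνpos v).le) hωρ s]
      with p hp ⟨_, hle⟩
    exact hp.not_ge hle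

lemma exists_isMinOn_zdual (hm : 0 < m) (hν : Measurable ν) (hνpos : ∀ v, 0 < ν v)
    (hass : ∀ l, Integrable (fun v => ν v * expA m l v) ↔ l ∈ dualDomain) (hf : Measurable f)
    (hf0 : ∀ v, 0 ≤ f v) (hfne : ¬ f =ᵐ[volume] fun _ => (0 : ℝ))
    (hfint : Integrable fun v => ν v * (1 + nsq v) * f v) :
    ∃ l ∈ dualDomain, IsMinOn (fun l => zdual m ν l (momVec m ν f)) dualDomain l := by
  set ρ := momVec m ν f
  have hint (l : L5) (hl : l ∈ dualDomain) := (hass l).2 hl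
  set l₀ : L5 := (0, 0, -1)
  have hl₀ : l₀ ∈ dualDomain := show (-1 : ℝ) < 0 by norm_num
  set S := {l | l ∈ dualDomain ∧ zdual m ν l ρ ≤ zdual m ν l₀ ρ}
  have hS : Bornology.IsBounded S :=
    isBounded_of_eventually_smul_notMem fun ω hω =>
      eventually_smul_notMem_sublevel hm hν hνpos hint hf hf0 hfne hfint
        (by rintro rfl; simp at hω) _
  obtain ⟨R, hR⟩ := isBounded_iff_forall_norm_le.1 hS
  have hSD : closure S ⊆ dualDomain := by
    refine closure_subset_dualDomain hν (fun v => (hνpos v).le) hass (fun l hl => hl.1)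
      (C := zdual m ν l₀ ρ + 5 * (R * ‖ρ‖)) fun l hl => ?_
    have hdot := le_of_abs_le (abs_dot5_le l ρ)
    have hnorm := mul_le_mul_of_nonneg_right (hR l hl) (norm_nonneg ρ)
    have hle : zdual m ν l ρ ≤ zdual m ν l₀ ρ := hl.2
    rw [zdual_eq] at hle
    linarith
  exact exists_isMinOn_of_closure_sublevel hl₀
    ((continuousOn_partitionFn hm.le hν (fun v => (hνpos v).le) hint).sub
      (continuous_dot5_left ρ).continuousOn) hS.isCompact_closure hSD

lemma strictConvexOn_partitionFn (hm : m ≠ 0) (hνpos : ∀ v, 0 < ν v)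
    (hint : ∀ l ∈ dualDomain, Integrable fun v => ν v * expA m l v) :
    StrictConvexOn ℝ dualDomain (partitionFn m ν) := by
  refine ⟨convex_dualDomain, fun x hx y hy hxy a b ha hb hab => ?_⟩
  set z := a • x + b • y
  have hz : z ∈ dualDomain := convex_dualDomain hx hy ha.le hb.le hab
  have hdot (v : V3) : dot5 z (aVec m v) = a * dot5 x (aVec m v) + b * dot5 y (aVec m v) := by
    rw [dot5_add_left, dot5_smul_left, dot5_smul_left]
  set D : V3 → ℝ := fun v =>
    a * (ν v * expA m x v) + b * (ν v * expA m y v) - ν v * expA m z v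
  have hD (v : V3) : 0 ≤ D v := by
    have := convexOn_exp.2 (Set.mem_univ (dot5 x (aVec m v))) (Set.mem_univ (dot5 y (aVec m v)))
      ha.le hb.le hab
    simp only [smul_eq_mul] at this
    have := mul_le_mul_of_nonneg_left this (hνpos v).le
    simp only [D, expA, hdot]
    linarith
  have hDpos (v : V3) (hv : dot5 x (aVec m v) ≠ dot5 y (aVec m v)) : 0 < D v := by
    have := strictConvexOn_exp.2 (Set.mem_univ _) (Set.mem_univ _) hv ha hb hab
    simp only [smul_eq_mul] at this
    have := mul_lt_mul_of_pos_left this (hνpos v)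
    simp only [D, expA, hdot]
    linarith
  have hX := (hint x hx).const_mul a
  have hY := (hint y hy).const_mul b
  have hXY : Integrable fun v => a * (ν v * expA m x v) + b * (ν v * expA m y v) := hX.add hY
  have hD_eq : ∫ v, D v = a * partitionFn m ν x + b * partitionFn m ν y - partitionFn m ν z := by
    simp only [D, partitionFn]
    rw [integral_sub hXY (hint z hz), integral_add hX hY, integral_const_mul, integral_const_mul]
  have hpos : 0 < ∫ v, D v := by
    refine integral_pos_of_pos_on (s := Set.univ \ {v | dot5 (x - y) (aVec m v) = 0})
      (hXY.sub (hint z hz)) (Eventually.of_forall hD) ?_ fun v hv => hDpos v ?_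
    · rw [measure_sdiff_null (volume_setOf_dot5_aVec_eq_zero hm (sub_ne_zero.2 hxy))]
      exact isOpen_univ.measure_pos volume Set.univ_nonempty
    · simpa [dot5_sub_left, sub_eq_zero] using hv
  rw [smul_eq_mul, smul_eq_mul]
  linarith

lemma strictConvexOn_zdual (hm : m ≠ 0) (hνpos : ∀ v, 0 < ν v)
    (hint : ∀ l ∈ dualDomain, Integrable fun v => ν v * expA m l v) (ρ : L5) :
    StrictConvexOn ℝ dualDomain fun l => zdual m ν l ρ :=
  (strictConvexOn_partitionFn hm hνpos hint).sub_concaveOn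
    ((dualCLM ρ).toLinearMap.concaveOn convex_dualDomain)

end Minimizer

theorem dual_attains_min_general
    (m : ℝ) (hm : 0 < m)
    (ν : V3 → ℝ) (hνmeas : Measurable ν) (hνpos : ∀ v, 0 < ν v)
    (hass : ∀ l : L5, Integrable (fun v => ν v * expA m l v) ↔ l.2.2 < 0)
    (f : V3 → ℝ) (hfmeas : Measurable f) (hf0 : ∀ v, 0 ≤ f v)
    (hfne : ¬ f =ᵐ[volume] (fun _ => (0 : ℝ)))
    (hfint : Integrable (fun v => ν v * (1 + nsq v) * f v)) :
    ∃! lstar : L5, lstar.2.2 < 0 ∧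
      ∀ l : L5, l.2.2 < 0 →
        zdual m ν lstar (momVec m ν f) ≤ zdual m ν l (momVec m ν f) := by
  obtain ⟨lstar, hlstar, hmin⟩ := exists_isMinOn_zdual hm hνmeas hνpos hass hfmeas hf0 hfne hfint
  refine ⟨lstar, ⟨hlstar, fun l hl => hmin hl⟩, fun l ⟨hl, hlmin⟩ => ?_⟩
  exact (strictConvexOn_zdual hm.ne' hνpos (fun l hl => (hass l).2 hl) _).eq_of_isMinOn
    (fun l' hl' => hlmin l' hl') hmin hl hlstar

/-- for `ρ = μ(f)` with `f ≥ 0` not a.e. zero and `ν(1+|v|²)f`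
integrable, the dual function `λ ↦ z(λ;ρ)` attains its infimum over
`Λ = {λ₂ < 0}` at a unique point `λ* ∈ Λ`. -/
theorem dual_attains_min
    (m : ℝ) (hm : 0 < m)
    (ν : V3 → ℝ) (hνmeas : Measurable ν) (hνpos : ∀ v, 0 < ν v)
    (hass : ∀ l : L5, Integrable (fun v => ν v * expA m l v) ↔ l.2.2 < 0)
    (hass2 : ∀ l : L5, l.2.2 < 0 →
      Integrable (fun v => ν v * (1 + nsq v) * expA m l v))
    (f : V3 → ℝ) (hfmeas : Measurable f) (hf0 : ∀ v, 0 ≤ f v)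
    (hfne : ¬ f =ᵐ[volume] (fun _ => (0 : ℝ)))
    (hfint : Integrable (fun v => ν v * (1 + nsq v) * f v)) :
    ∃! lstar : L5, lstar.2.2 < 0 ∧
      ∀ l : L5, l.2.2 < 0 →
        zdual m ν lstar (momVec m ν f) ≤ zdual m ν l (momVec m ν f) :=
  dual_attains_min_general m hm ν hνmeas hνpos hass f hfmeas hf0 hfne hfint
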